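/- If a sequent Γ ⊢ Δ has a cut-free CLKID^ω proof, then it has a cut-free cycle-normal CLKID^ω_a proof. -/

import Mathlib

namespace CLKID

/-- Terms of the language: variables, the constant `0`, and the unary function `s`. -/
inductive Tm : Type where
  | var : ℕ → Tm
  | zero : Tm
  | s : Tm → Tm
deriving DecidableEq

/-- `sIter n t` is the term `s^n t`. -/
def sIter : ℕ → Tm → Tm
  | 0, t => t
  | n + 1, t => Tm.s (sIter n t)

/-- Substitution on terms. -/
def Tm.subst (θ : ℕ → Tm) : Tm → Tm
  | .var x => θ x
  | .zero => .zero
  | .s t => .s (t.subst θ)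

/-- Free variables of a term. -/
def Tm.fv : Tm → Set ℕ
  | .var x => {x}
  | .zero => ∅
  | .s t => t.fv

/-- Subterms of a term. -/
def Tm.sub : Tm → Set Tm
  | .var x => {Tm.var x}
  | .zero => {Tm.zero}
  | .s t => insert (Tm.s t) t.sub

/-- The variable of a term (`none` if the term is of the form `s^n 0`). -/
def Tm.varOf : Tm → Option ℕ
  | .var x => some x
  | .zero => none
  | .s t => t.varOf

/-- Formulas: equations, the two inductive-predicate atoms `Add1`/`Add2`,
    and the usual first-order connectives and quantifiers. -/
inductive Fm : Type where
  | eq : Tm → Tm → Fm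
  | add1 : Tm → Tm → Tm → Fm
  | add2 : Tm → Tm → Tm → Fm
  | not : Fm → Fm
  | and : Fm → Fm → Fm
  | or : Fm → Fm → Fm
  | imp : Fm → Fm → Fm
  | all : ℕ → Fm → Fm
  | ex : ℕ → Fm → Fm
deriving DecidableEq

/-- Substitution on formulas. -/
def Fm.subst (θ : ℕ → Tm) : Fm → Fm
  | .eq t u => .eq (t.subst θ) (u.subst θ)
  | .add1 a b c => .add1 (a.subst θ) (b.subst θ) (c.subst θ)
  | .add2 a b c => .add2 (a.subst θ) (b.subst θ) (c.subst θ)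
  | .not φ => .not (φ.subst θ)
  | .and φ ψ => .and (φ.subst θ) (ψ.subst θ)
  | .or φ ψ => .or (φ.subst θ) (ψ.subst θ)
  | .imp φ ψ => .imp (φ.subst θ) (ψ.subst θ)
  | .all x φ => .all x (φ.subst (Function.update θ x (Tm.var x)))
  | .ex x φ => .ex x (φ.subst (Function.update θ x (Tm.var x)))

/-- Free variables of a formula. -/
def Fm.fv : Fm → Set ℕ
  | .eq t u => t.fv ∪ u.fv
  | .add1 a b c => a.fv ∪ b.fv ∪ c.fv
  | .add2 a b c => a.fv ∪ b.fv ∪ c.fv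
  | .not φ => φ.fv
  | .and φ ψ => φ.fv ∪ ψ.fv
  | .or φ ψ => φ.fv ∪ ψ.fv
  | .imp φ ψ => φ.fv ∪ ψ.fv
  | .all x φ => φ.fv \ {x}
  | .ex x φ => φ.fv \ {x}

/-- Terms occurring in a formula. -/
def Fm.tms : Fm → Set Tm
  | .eq t u => t.sub ∪ u.sub
  | .add1 a b c => a.sub ∪ b.sub ∪ c.sub
  | .add2 a b c => a.sub ∪ b.sub ∪ c.sub
  | .not φ => φ.tms
  | .and φ ψ => φ.tms ∪ ψ.tms
  | .or φ ψ => φ.tms ∪ ψ.tms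
  | .imp φ ψ => φ.tms ∪ ψ.tms
  | .all _ φ => φ.tms
  | .ex _ φ => φ.tms

/-- The substitution `[x := t]`. -/
def sub1 (x : ℕ) (t : Tm) : ℕ → Tm := fun y => if y = x then t else Tm.var y

/-- The simultaneous substitution `[v1 := t, v2 := u]`. -/
def sub2 (v1 v2 : ℕ) (t u : Tm) : ℕ → Tm :=
  fun z => if z = v1 then t else if z = v2 then u else Tm.var z

/-- `≡_Γ`: the smallest congruence relation on terms containing all pairs `(t, u)`
    with the equation `t = u` in `Γ`. -/
inductive EqvTm (Γ : Set Fm) : Tm → Tm → Prop where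
  | base {t u : Tm} : Fm.eq t u ∈ Γ → EqvTm Γ t u
  | refl (t : Tm) : EqvTm Γ t t
  | symm {t u : Tm} : EqvTm Γ t u → EqvTm Γ u t
  | trans {t u v : Tm} : EqvTm Γ t u → EqvTm Γ u v → EqvTm Γ t v
  | sCongr {t u : Tm} : EqvTm Γ t u → EqvTm Γ (Tm.s t) (Tm.s u)

/-- `t ~_Γ u` : `s^n t ≡_Γ s^m u` for some naturals `n`, `m`. -/
def DepTm (Γ : Set Fm) (t u : Tm) : Prop := ∃ n m : ℕ, EqvTm Γ (sIter n t) (sIter m u)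

/-- A sequent: a pair of finite sets of formulas. -/
structure Seq where
  ant : Finset Fm
  suc : Finset Fm

/-- The antecedent of a sequent, as a set of formulas. -/
def antSet (S : Seq) : Set Fm := ↑S.ant

/-- `[Γ]` from Lemma on chains: `{ s^n t1 = s^n t2 | t1 = t2 ∈ Γ or t2 = t1 ∈ Γ }`. -/
def brkt (Γ : Set Fm) : Set Fm :=
  {φ | ∃ (n : ℕ) (t1 t2 : Tm), φ = Fm.eq (sIter n t1) (sIter n t2) ∧
        (Fm.eq t1 t2 ∈ Γ ∨ Fm.eq t2 t1 ∈ Γ)}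

/-- `B1(Γ ⊢ Δ)` : second arguments of `Add1` atoms in the consequent. -/
def B1 (S : Seq) : Set Tm := {b | ∃ a c, Fm.add1 a b c ∈ S.suc}

/-- `C(Γ ⊢ Δ)` : third arguments of `Add2` atoms in the antecedent
    or `Add1` atoms in the consequent. -/
def Cset (S : Seq) : Set Tm :=
  {c | (∃ a b, Fm.add2 a b c ∈ S.ant) ∨ (∃ a b, Fm.add1 a b c ∈ S.suc)}

/-- Index sequent. -/
def IndexSequent (S : Seq) : Prop :=
  (∀ t ∈ B1 S, ∀ u ∈ Cset S, ¬ DepTm (antSet S) t u) ∧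
  (∀ b ∈ B1 S, ∀ b' ∈ B1 S, ∀ n m : ℕ, EqvTm (antSet S) (sIter n b) (sIter m b') → n = m)

/-! ## The cyclic proof systems `CLKID^ω` and `CLKID^ω_a` -/

/-- Rule labels; each label carries the instance data needed to describe the
    rule application (principal formulas, substitutions, case variables, ...).
    `bud` labels bud leaves of cyclic derivation trees. -/
inductive Rule : Type where
  | ax
  | weak
  | cut (φ : Fm)
  | subst (θ : ℕ → Tm)
  | negL (φ : Fm)
  | negR (φ : Fm)
  | andL (φ ψ : Fm)
  | andR (φ ψ : Fm)
  | orL (φ ψ : Fm)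
  | orR (φ ψ : Fm)
  | impL (φ ψ : Fm)
  | impR (φ ψ : Fm)
  | allL (x : ℕ) (t : Tm) (φ : Fm)
  | allR (x : ℕ) (φ : Fm)
  | exL (x : ℕ) (φ : Fm)
  | exR (x : ℕ) (t : Tm) (φ : Fm)
  | eqR (t : Tm)
  | eqL (v1 v2 : ℕ) (t u : Tm)
  | eqLa (v1 v2 : ℕ) (t u : Tm)
  | add1R1
  | add1R2 (a b c : Tm)
  | add2R1
  | add2R2 (a b c : Tm)
  | caseAdd1 (a b c : Tm) (x y z : ℕ)
  | caseAdd2 (a b c : Tm) (x y z : ℕ)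
  | bud

/-- `Inf r S L` : the sequent `S` follows from the list of premises `L`
    by the rule (instance) `r`. -/
inductive Inf : Rule → Seq → List Seq → Prop where
  | ax {Γ Δ : Finset Fm} :
      (Γ ∩ Δ).Nonempty → Inf .ax ⟨Γ, Δ⟩ []
  | weak {Γ Δ Γ' Δ' : Finset Fm} :
      Γ' ⊆ Γ → Δ' ⊆ Δ → Inf .weak ⟨Γ, Δ⟩ [⟨Γ', Δ'⟩]
  | cut {Γ Δ : Finset Fm} {φ : Fm} :
      Inf (.cut φ) ⟨Γ, Δ⟩ [⟨Γ, insert φ Δ⟩, ⟨insert φ Γ, Δ⟩]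
  | subst {Γ Δ : Finset Fm} {θ : ℕ → Tm} :
      Inf (.subst θ) ⟨Γ.image (Fm.subst θ), Δ.image (Fm.subst θ)⟩ [⟨Γ, Δ⟩]
  | negL {Γ Δ : Finset Fm} {φ : Fm} :
      Inf (.negL φ) ⟨insert (.not φ) Γ, Δ⟩ [⟨Γ, insert φ Δ⟩]
  | negR {Γ Δ : Finset Fm} {φ : Fm} :
      Inf (.negR φ) ⟨Γ, insert (.not φ) Δ⟩ [⟨insert φ Γ, Δ⟩]
  | andL {Γ Δ : Finset Fm} {φ ψ : Fm} :
      Inf (.andL φ ψ) ⟨insert (.and φ ψ) Γ, Δ⟩ [⟨insert φ (insert ψ Γ), Δ⟩]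
  | andR {Γ Δ : Finset Fm} {φ ψ : Fm} :
      Inf (.andR φ ψ) ⟨Γ, insert (.and φ ψ) Δ⟩ [⟨Γ, insert φ Δ⟩, ⟨Γ, insert ψ Δ⟩]
  | orL {Γ Δ : Finset Fm} {φ ψ : Fm} :
      Inf (.orL φ ψ) ⟨insert (.or φ ψ) Γ, Δ⟩ [⟨insert φ Γ, Δ⟩, ⟨insert ψ Γ, Δ⟩]
  | orR {Γ Δ : Finset Fm} {φ ψ : Fm} :
      Inf (.orR φ ψ) ⟨Γ, insert (.or φ ψ) Δ⟩ [⟨Γ, insert φ (insert ψ Δ)⟩]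
  | impL {Γ Δ : Finset Fm} {φ ψ : Fm} :
      Inf (.impL φ ψ) ⟨insert (.imp φ ψ) Γ, Δ⟩ [⟨Γ, insert φ Δ⟩, ⟨insert ψ Γ, Δ⟩]
  | impR {Γ Δ : Finset Fm} {φ ψ : Fm} :
      Inf (.impR φ ψ) ⟨Γ, insert (.imp φ ψ) Δ⟩ [⟨insert φ Γ, insert ψ Δ⟩]
  | allL {Γ Δ : Finset Fm} {x : ℕ} {t : Tm} {φ : Fm} :
      Inf (.allL x t φ) ⟨insert (.all x φ) Γ, Δ⟩ [⟨insert (φ.subst (sub1 x t)) Γ, Δ⟩]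
  | allR {Γ Δ : Finset Fm} {x : ℕ} {φ : Fm} :
      (∀ ψ ∈ Γ ∪ Δ, x ∉ Fm.fv ψ) →
      Inf (.allR x φ) ⟨Γ, insert (.all x φ) Δ⟩ [⟨Γ, insert φ Δ⟩]
  | exL {Γ Δ : Finset Fm} {x : ℕ} {φ : Fm} :
      (∀ ψ ∈ Γ ∪ Δ, x ∉ Fm.fv ψ) →
      Inf (.exL x φ) ⟨insert (.ex x φ) Γ, Δ⟩ [⟨insert φ Γ, Δ⟩]
  | exR {Γ Δ : Finset Fm} {x : ℕ} {t : Tm} {φ : Fm} :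
      Inf (.exR x t φ) ⟨Γ, insert (.ex x φ) Δ⟩ [⟨Γ, insert (φ.subst (sub1 x t)) Δ⟩]
  | eqR {Γ Δ : Finset Fm} {t : Tm} :
      Inf (.eqR t) ⟨Γ, insert (.eq t t) Δ⟩ []
  | eqL {Γ Δ : Finset Fm} {v1 v2 : ℕ} {t u : Tm} :
      Inf (.eqL v1 v2 t u)
        ⟨insert (.eq t u) (Γ.image (Fm.subst (sub2 v1 v2 t u))),
          Δ.image (Fm.subst (sub2 v1 v2 t u))⟩
        [⟨Γ.image (Fm.subst (sub2 v1 v2 u t)), Δ.image (Fm.subst (sub2 v1 v2 u t))⟩]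
  | eqLa {Γ Δ : Finset Fm} {v1 v2 : ℕ} {t u : Tm} :
      Inf (.eqLa v1 v2 t u)
        ⟨insert (.eq t u) (Γ.image (Fm.subst (sub2 v1 v2 t u))),
          Δ.image (Fm.subst (sub2 v1 v2 t u))⟩
        [⟨insert (.eq t u) (Γ.image (Fm.subst (sub2 v1 v2 u t))),
          Δ.image (Fm.subst (sub2 v1 v2 u t))⟩]
  | add1R1 {Γ Δ : Finset Fm} {b : Tm} :
      Inf .add1R1 ⟨Γ, insert (.add1 .zero b b) Δ⟩ []
  | add1R2 {Γ Δ : Finset Fm} {a b c : Tm} :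
      Inf (.add1R2 a b c) ⟨Γ, insert (.add1 (.s a) b (.s c)) Δ⟩ [⟨Γ, insert (.add1 a b c) Δ⟩]
  | add2R1 {Γ Δ : Finset Fm} {b : Tm} :
      Inf .add2R1 ⟨Γ, insert (.add2 .zero b b) Δ⟩ []
  | add2R2 {Γ Δ : Finset Fm} {a b c : Tm} :
      Inf (.add2R2 a b c) ⟨Γ, insert (.add2 (.s a) b c) Δ⟩ [⟨Γ, insert (.add2 a (.s b) c) Δ⟩]
  | caseAdd1 {Γ Δ : Finset Fm} {a b c : Tm} {x y z : ℕ} :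
      x ≠ y → x ≠ z → y ≠ z →
      (∀ ψ ∈ insert (Fm.add1 a b c) (Γ ∪ Δ), x ∉ Fm.fv ψ ∧ y ∉ Fm.fv ψ ∧ z ∉ Fm.fv ψ) →
      Inf (.caseAdd1 a b c x y z) ⟨insert (.add1 a b c) Γ, Δ⟩
        [⟨insert (.eq a .zero) (insert (.eq b (.var y)) (insert (.eq c (.var y)) Γ)), Δ⟩,
         ⟨insert (.eq a (.s (.var x))) (insert (.eq b (.var y)) (insert (.eq c (.s (.var z)))
            (insert (.add1 (.var x) (.var y) (.var z)) Γ))), Δ⟩]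
  | caseAdd2 {Γ Δ : Finset Fm} {a b c : Tm} {x y z : ℕ} :
      x ≠ y → x ≠ z → y ≠ z →
      (∀ ψ ∈ insert (Fm.add2 a b c) (Γ ∪ Δ), x ∉ Fm.fv ψ ∧ y ∉ Fm.fv ψ ∧ z ∉ Fm.fv ψ) →
      Inf (.caseAdd2 a b c x y z) ⟨insert (.add2 a b c) Γ, Δ⟩
        [⟨insert (.eq a .zero) (insert (.eq b (.var y)) (insert (.eq c (.var y)) Γ)), Δ⟩,
         ⟨insert (.eq a (.s (.var x))) (insert (.eq b (.var y)) (insert (.eq c (.var z))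
            (insert (.add2 (.var x) (.s (.var y)) (.var z)) Γ))), Δ⟩]

/-- A labeling of tree nodes (finite sequences of naturals) by sequents and rules;
    `none` means the node is not in the tree. -/
abbrev Lbl : Type := List ℕ → Option (Seq × Rule)

/-- The children of `σ` are labeled exactly by the premise list `prems`. -/
def childrenOK (f : Lbl) (σ : List ℕ) (prems : List Seq) : Prop :=
  (∀ i : Fin prems.length, ∃ r', f (σ ++ [(i : ℕ)]) = some (prems.get i, r')) ∧
  (∀ i : ℕ, prems.length ≤ i → f (σ ++ [i]) = none)

/-- Derivation trees (possibly infinite): prefix-closed domain, each non-bud node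
    is the conclusion of a rule whose premises label its children, buds are leaves. -/
structure DTree where
  label : Lbl
  root_def : label [] ≠ none
  prefix_closed : ∀ σ τ : List ℕ, label (σ ++ τ) ≠ none → label σ ≠ none
  wf : ∀ σ S r, label σ = some (S, r) →
    (r = Rule.bud ∧ ∀ i : ℕ, label (σ ++ [i]) = none) ∨
    (r ≠ Rule.bud ∧ ∃ prems, Inf r S prems ∧ childrenOK label σ prems)

/-- `σ` is a bud of the labeling `f`. -/
def budAt (f : Lbl) (σ : List ℕ) : Prop := ∃ S, f σ = some (S, Rule.bud)

/-- `σ` is an inner node of `f` labeled with the sequent `S`. -/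
def innerWith (f : Lbl) (σ : List ℕ) (S : Seq) : Prop :=
  ∃ r, f σ = some (S, r) ∧ r ≠ Rule.bud

/-- A pre-proof: a finite derivation tree together with a function assigning to
    each bud a companion, i.e. an inner node labeled with the same sequent. -/
structure PreProof where
  D : DTree
  fin : {σ : List ℕ | D.label σ ≠ none}.Finite
  C : List ℕ → List ℕ
  comp : ∀ σ S, D.label σ = some (S, Rule.bud) → innerWith D.label (C σ) S

/-- Cycle-normality: every companion is an ancestor of its bud. -/
def PreProof.CycleNormal (P : PreProof) : Prop :=
  ∀ σ S, P.D.label σ = some (S, Rule.bud) → P.C σ <+: σ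

/-- `T` is the tree-unfolding of the pre-proof `P`: it agrees with `P.D` on
    non-bud nodes, below a bud it continues as below the bud's companion, and it
    is empty on nodes not in `P.D` having no bud prefix. -/
def IsUnfolding (P : PreProof) (T : Lbl) : Prop :=
  (∀ σ, P.D.label σ ≠ none → ¬ budAt P.D.label σ → T σ = P.D.label σ) ∧
  (∀ σ₁ σ₂ : List ℕ, budAt P.D.label σ₁ → T (σ₁ ++ σ₂) = T (P.C σ₁ ++ σ₂)) ∧
  (∀ σ, P.D.label σ = none → (∀ σ₁, σ₁ <+: σ → ¬ budAt P.D.label σ₁) → T σ = none)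

/-- An infinite path in the labeling `f`. -/
def IsInfPath (f : Lbl) (p : ℕ → List ℕ) : Prop :=
  (∀ i, f (p i) ≠ none) ∧ (∀ i, ∃ n : ℕ, p (i + 1) = p i ++ [n])

/-- Atomic formulas with an inductive predicate. -/
def isIndAtom (φ : Fm) : Prop :=
  (∃ a b c, φ = Fm.add1 a b c) ∨ (∃ a b c, φ = Fm.add2 a b c)

/-- A progressing trace step: the traced formula is the principal formula of a
    case rule and its successor (in the corresponding case distinction, child `j`)
    is a case-descendant. -/
def progStep : Rule → ℕ → Fm → Fm → Prop := fun r j τ τ' =>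
  match r with
  | .caseAdd1 a b c x y z =>
      τ = Fm.add1 a b c ∧ j = 1 ∧ τ' = Fm.add1 (.var x) (.var y) (.var z)
  | .caseAdd2 a b c x y z =>
      τ = Fm.add2 a b c ∧ j = 1 ∧ τ' = Fm.add2 (.var x) (.s (.var y)) (.var z)
  | _ => False

/-- The trace connection relation between the traced formula at a conclusion of a
    rule `r` and the traced formula at its `j`-th premise. -/
def connStep : Rule → ℕ → Fm → Fm → Prop := fun r j τ τ' =>
  match r with
  | .subst θ => τ = Fm.subst θ τ'
  | .eqL v1 v2 t u =>
      ∃ F : Fm, τ = Fm.subst (sub2 v1 v2 t u) F ∧ τ' = Fm.subst (sub2 v1 v2 u t) F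
  | .eqLa v1 v2 t u =>
      ∃ F : Fm, τ = Fm.subst (sub2 v1 v2 t u) F ∧ τ' = Fm.subst (sub2 v1 v2 u t) F
  | .caseAdd1 a b c x y z => τ' = τ ∨ progStep (.caseAdd1 a b c x y z) j τ τ'
  | .caseAdd2 a b c x y z => τ' = τ ∨ progStep (.caseAdd2 a b c x y z) j τ τ'
  | _ => τ' = τ

/-- `τ` is a trace following the tail from `k` of the path `p` in `f`. -/
def IsTraceFrom (f : Lbl) (p : ℕ → List ℕ) (k : ℕ) (τ : ℕ → Fm) : Prop :=
  ∀ i, k ≤ i →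
    ∃ (S : Seq) (r : Rule) (j : ℕ), f (p i) = some (S, r) ∧ τ i ∈ S.ant ∧ isIndAtom (τ i) ∧
      p (i + 1) = p i ++ [j] ∧ connStep r j (τ i) (τ (i + 1))

/-- The trace `τ` progresses at position `i` of the path `p`. -/
def progAt (f : Lbl) (p : ℕ → List ℕ) (τ : ℕ → Fm) (i : ℕ) : Prop :=
  ∃ (S : Seq) (r : Rule) (j : ℕ), f (p i) = some (S, r) ∧ p (i + 1) = p i ++ [j] ∧
    progStep r j (τ i) (τ (i + 1))

/-- The global trace condition for a (possibly infinite) labeling `f`. -/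
def GTC (f : Lbl) : Prop :=
  ∀ p : ℕ → List ℕ, IsInfPath f p →
    ∃ (k : ℕ) (τ : ℕ → Fm), IsTraceFrom f p k τ ∧
      ∀ n : ℕ, ∃ i, n ≤ i ∧ k ≤ i ∧ progAt f p τ i

/-- A pre-proof is a proof when its tree-unfolding satisfies the
    global trace condition. -/
def PreProof.IsProof (P : PreProof) : Prop := ∃ T : Lbl, IsUnfolding P T ∧ GTC T

/-- Some rule satisfying `Q` occurs in the labeling `f`. -/
def usesRule (f : Lbl) (Q : Rule → Prop) : Prop := ∃ σ S r, f σ = some (S, r) ∧ Q r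

/-- No occurrence of (Cut). -/
def PreProof.CutFree (P : PreProof) : Prop :=
  ¬ usesRule P.D.label (fun r => ∃ φ, r = Rule.cut φ)

/-- No occurrence of (= L_a): the pre-proof is a `CLKID^ω` pre-proof. -/
def PreProof.NoEqLa (P : PreProof) : Prop :=
  ¬ usesRule P.D.label (fun r => ∃ v1 v2 t u, r = Rule.eqLa v1 v2 t u)

/-- No occurrence of (= L): the pre-proof is a `CLKID^ω_a` pre-proof. -/
def PreProof.NoEqL (P : PreProof) : Prop :=
  ¬ usesRule P.D.label (fun r => ∃ v1 v2 t u, r = Rule.eqL v1 v2 t u)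

/-- The conclusion of the pre-proof is the sequent `S`. -/
def PreProof.Concl (P : PreProof) (S : Seq) : Prop := ∃ r, P.D.label [] = some (S, r)

/-- Provability in `CLKID^ω`. -/
def ProvableW (S : Seq) : Prop :=
  ∃ P : PreProof, P.IsProof ∧ P.NoEqLa ∧ P.Concl S

/-- Provability in `CLKID^ω_a`. -/
def ProvableWa (S : Seq) : Prop :=
  ∃ P : PreProof, P.IsProof ∧ P.NoEqL ∧ P.Concl S

/-- Cut-free provability in `CLKID^ω`. -/
def CutFreeProvableW (S : Seq) : Prop :=
  ∃ P : PreProof, P.IsProof ∧ P.CutFree ∧ P.NoEqLa ∧ P.Concl S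

/-- The sequent `Add2(x, y, z) ⊢ Add1(x, y, z)`. -/
def goalSeq : Seq :=
  ⟨{Fm.add2 (Tm.var 0) (Tm.var 1) (Tm.var 2)}, {Fm.add1 (Tm.var 0) (Tm.var 1) (Tm.var 2)}⟩

/-- A cut-free cycle-normal `CLKID^ω_a` proof of `Add2(x,y,z) ⊢ Add1(x,y,z)`. -/
def IsCNProofOfGoal (P : PreProof) : Prop :=
  P.IsProof ∧ P.CutFree ∧ P.NoEqL ∧ P.CycleNormal ∧ P.Concl goalSeq

/-- The index of an `Add2` atom with second argument `b` in the sequent `S` is `⊥`. -/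
def IndexBot (S : Seq) (b : Tm) : Prop :=
  ∀ a' b' c', Fm.add1 a' b' c' ∈ S.suc → ¬ DepTm (antSet S) b b'

/-- `σ` is a switching point of `f`: the conclusion of a `(Case Add2)` rule whose
    principal formula has index `⊥`. -/
def SwitchingPoint (f : Lbl) (σ : List ℕ) : Prop :=
  ∃ S a b c x y z, f σ = some (S, Rule.caseAdd2 a b c x y z) ∧ IndexBot S b

/-- `σ` is the conclusion of a `(Case Add2)` rule in `f`. -/
def CaseAdd2At (f : Lbl) (σ : List ℕ) : Prop :=
  ∃ S a b c x y z, f σ = some (S, Rule.caseAdd2 a b c x y z)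

/-- The node `σ` of `f` is labeled with an index sequent. -/
def IndexSequentAt (f : Lbl) (σ : List ℕ) : Prop :=
  ∃ S r, f σ = some (S, r) ∧ IndexSequent S

/-- A finite index path `p 0, …, p N` in `f`:  its first sequent is an index
    sequent, and a step to the left premise (child `0`) of a `(Case Add2)` rule
    only happens at switching points. -/
def IsIndexPathUpTo (f : Lbl) (p : ℕ → List ℕ) (N : ℕ) : Prop :=
  (∀ i, i ≤ N → f (p i) ≠ none) ∧
  (∀ i, i < N → ∃ n : ℕ, p (i + 1) = p i ++ [n]) ∧
  IndexSequentAt f (p 0) ∧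
  (∀ i, i < N → CaseAdd2At f (p i) → p (i + 1) = p i ++ [0] → SwitchingPoint f (p i))

/-- An infinite index path in `f`. -/
def IsInfIndexPath (f : Lbl) (p : ℕ → List ℕ) : Prop :=
  IsInfPath f p ∧
  IndexSequentAt f (p 0) ∧
  (∀ i, CaseAdd2At f (p i) → p (i + 1) = p i ++ [0] → SwitchingPoint f (p i))

/-- The child index chosen by the rightmost path: the right assumption of
    `(Case Add2)`, the unique premise otherwise. -/
def rightIdx : Rule → ℕ := fun r =>
  match r with
  | .caseAdd2 _ _ _ _ _ _ => 1
  | _ => 0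

/-- One step of the rightmost path in `f`. -/
def RightStep (f : Lbl) (σ σ' : List ℕ) : Prop :=
  ∃ S r, f σ = some (S, r) ∧ σ' = σ ++ [rightIdx r] ∧ f σ' ≠ none

/-- `A(Γ ⊢ Δ)` of Lemma `abc_relations`. -/
def Aset (S : Seq) : Set Tm :=
  {a | (∃ b c, Fm.add2 a b c ∈ S.ant) ∨ (∃ b c, Fm.add1 a b c ∈ S.suc) ∨ a = Tm.zero}

/-- `BC(Γ ⊢ Δ)` of Lemma `abc_relations`. -/
def BCset (S : Seq) : Set Tm :=
  {t | (∃ a c, Fm.add2 a t c ∈ S.ant) ∨ (∃ a b, Fm.add2 a b t ∈ S.ant) ∨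
       (∃ a c, Fm.add1 a t c ∈ S.suc) ∨ (∃ a b, Fm.add1 a b t ∈ S.suc)}

/-- The rules that can occur in a cut-free cycle-normal `CLKID^ω_a` proof of
    `Add2(x,y,z) ⊢ Add1(x,y,z)` (plus bud labels). -/
def allowedRule (r : Rule) : Prop :=
  r = Rule.bud ∨ r = Rule.weak ∨ (∃ θ, r = Rule.subst θ) ∨
  (∃ v1 v2 t u, r = Rule.eqLa v1 v2 t u) ∨
  (∃ a b c x y z, r = Rule.caseAdd2 a b c x y z) ∨
  r = Rule.add1R1 ∨ (∃ a b c, r = Rule.add1R2 a b c)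

/-!
A pre-proof is read as a finite graph on its inner nodes, a bud being identified with its
companion; its tree-unfolding is the unfolding of this graph. Every `(= L)` node is replaced by
an `(= L_a)` node followed by a weakening that drops the retained equation. The trace relations
are unchanged and the weakenings only make traces stand still, so the global trace condition
survives: a trace is re-indexed by counting the steps that were not inserted.

A finite graph unfolds into a cycle-normal pre-proof: follow the unfolding and close a branch by
a bud as soon as it revisits a vertex, with the earlier occurrence as companion. The unfolding of
this pre-proof is again the unfolding of the graph, and only rules of the graph occur in it, so
cut-freeness is preserved.
-/

lemma _root_.List.finite_of_length_le_of_forall_mem {α : Type*} {I : Set α} (hI : I.Finite)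
    (N : ℕ) : {l : List α | l.length ≤ N ∧ ∀ x ∈ l, x ∈ I}.Finite := by
  have := hI.to_subtype
  refine ((List.finite_length_le I N).image (List.map Subtype.val)).subset ?_
  rintro l ⟨hlen, hmem⟩
  exact ⟨l.attachWith I hmem, (List.length_attachWith (l := l)).trans_le hlen,
    List.unattach_attachWith⟩

lemma _root_.Nat.infinite_setOf_of_forall_or_succ {p : ℕ → Prop}
    (h : ∀ i, p i ∨ p (i + 1)) : (Set.ofPred p).Infinite := by
  refine Set.infinite_of_forall_exists_gt fun a => ?_
  rcases h (a + 1) with h | h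
  · exact ⟨a + 1, h, by omega⟩
  · exact ⟨a + 2, h, by omega⟩

def Rule.eqLToEqLa : Rule → Rule
  | .eqL v1 v2 t u => .eqLa v1 v2 t u
  | r => r

def Rule.IsEqL (r : Rule) : Prop := ∃ v1 v2 t u, r = .eqL v1 v2 t u

lemma Rule.eqLToEqLa_of_not_isEqL {r : Rule} (h : ¬ r.IsEqL) : r.eqLToEqLa = r := by
  cases r <;> first | rfl | exact absurd ⟨_, _, _, _, rfl⟩ h

lemma Rule.eqLToEqLa_eq_cut {r : Rule} {φ : Fm} (h : r.eqLToEqLa = .cut φ) : r = .cut φ := by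
  cases r <;> simp_all [Rule.eqLToEqLa]

lemma Rule.eqLToEqLa_ne_eqL (r : Rule) (v1 v2 : ℕ) (t u : Tm) :
    r.eqLToEqLa ≠ .eqL v1 v2 t u := by
  cases r <;> simp [Rule.eqLToEqLa]

lemma connStep_eqLToEqLa (r : Rule) : connStep r.eqLToEqLa = connStep r := by
  cases r <;> rfl

lemma progStep_eqLToEqLa (r : Rule) : progStep r.eqLToEqLa = progStep r := by
  cases r <;> rfl

/-- The global trace condition along a single infinite path, given by the labels `L i` of its
nodes and the child indices `n i` it takes. -/
def PathGTC (L : ℕ → Seq × Rule) (n : ℕ → ℕ) : Prop :=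
  ∃ (k : ℕ) (τ : ℕ → Fm),
    (∀ i, k ≤ i → τ i ∈ (L i).1.ant ∧ isIndAtom (τ i) ∧
      connStep (L i).2 (n i) (τ i) (τ (i + 1))) ∧
    ∀ N, ∃ i, N ≤ i ∧ k ≤ i ∧ progStep (L i).2 (n i) (τ i) (τ (i + 1))

lemma exists_trace_iff_pathGTC {f : Lbl} {p : ℕ → List ℕ} {L : ℕ → Seq × Rule}
    {n : ℕ → ℕ} (hL : ∀ i, f (p i) = some (L i)) (hp : ∀ i, p (i + 1) = p i ++ [n i]) :
    (∃ (k : ℕ) (τ : ℕ → Fm),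
        IsTraceFrom f p k τ ∧ ∀ N, ∃ i, N ≤ i ∧ k ≤ i ∧ progAt f p τ i) ↔
      PathGTC L n := by
  have hj : ∀ i j, p (i + 1) = p i ++ [j] ↔ j = n i := by
    intro i j
    rw [hp, List.append_cancel_left_eq, List.singleton_inj, eq_comm]
  simp only [PathGTC, IsTraceFrom, progAt, hL, hj, Option.some.injEq, Prod.ext_iff, and_assoc,
    exists_and_left, exists_eq_left, exists_eq_left']

/-- Inserting weakening steps into a path, and replacing rules by rules with the same trace
relations, preserves the trace condition: a trace of the original path, read at the `count`-th
position, is a trace of the new one, which stands still across the inserted steps. -/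
lemma PathGTC.of_stutter {L L' : ℕ → Seq × Rule} {n n' : ℕ → ℕ} (keep : ℕ → Prop)
    [DecidablePred keep] (hkeep : ∀ i, keep i ∨ keep (i + 1))
    (hkept : ∀ i, keep i →
      (L' (Nat.count keep i)).1.ant ⊆ (L i).1.ant ∧ n' (Nat.count keep i) = n i ∧
        connStep (L' (Nat.count keep i)).2 = connStep (L i).2 ∧
        progStep (L' (Nat.count keep i)).2 = progStep (L i).2)
    (hskip : ∀ i, ¬ keep i → (L i).2 = .weak ∧ (L' (Nat.count keep i)).1.ant ⊆ (L i).1.ant)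
    (h : PathGTC L' n') : PathGTC L n := by
  obtain ⟨k, τ, htrace, hprog⟩ := h
  have hinf := Nat.infinite_setOf_of_forall_or_succ hkeep
  refine ⟨Nat.nth keep k, fun i => τ (Nat.count keep i), fun i hi => ?_, fun N => ?_⟩
  · have hki : k ≤ Nat.count keep i :=
      Nat.count_nth_of_infinite hinf k ▸ Nat.count_monotone keep hi
    obtain ⟨hmem, hind, hconn⟩ := htrace _ hki
    by_cases hi : keep i
    · obtain ⟨hsub, hn, hc, -⟩ := hkept i hi
      refine ⟨hsub hmem, hind, ?_⟩
      simp only [Nat.count_succ_eq_succ_count hi, ← hc, ← hn]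
      exact hconn
    · obtain ⟨hweak, hsub⟩ := hskip i hi
      refine ⟨hsub hmem, hind, ?_⟩
      simp only [Nat.count_succ_eq_count hi, hweak]
      rfl
  · obtain ⟨j, hNj, hkj, hpj⟩ := hprog (max N (Nat.nth keep k))
    have hkeep_j : keep (Nat.nth keep j) := Nat.nth_mem_of_infinite hinf j
    have hj : Nat.count keep (Nat.nth keep j) = j := Nat.count_nth_of_infinite hinf j
    have hle : j ≤ Nat.nth keep j := hj.symm.trans_le (Nat.count_le keep)
    obtain ⟨-, hn, -, hp⟩ := hkept _ hkeep_j
    refine ⟨Nat.nth keep j, by omega, by omega, ?_⟩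
    simp only [Nat.count_succ_eq_succ_count hkeep_j, ← hp, ← hn, hj]
    exact hpj

/-- A rooted graph of sequents with rules; `next v i` is the vertex at the `i`-th premise of `v`. -/
structure ProofGraph (V : Type*) where
  root : V
  next : V → ℕ → Option V
  label : V → Seq × Rule

namespace ProofGraph

variable {V : Type*} (G : ProofGraph V)

def walk (α : List ℕ) : Option V := α.foldlM G.next G.root

def Reachable (v : V) : Prop := ∃ α, G.walk α = some v

def unfold : Lbl := fun α => (G.walk α).map G.label

def Sound (v : V) : Prop :=
  (G.label v).2 ≠ .bud ∧ ∃ prems, Inf (G.label v).2 (G.label v).1 prems ∧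
    (∀ i : Fin prems.length, ∃ w, G.next v i = some w ∧ (G.label w).1 = prems.get i) ∧
    ∀ i, prems.length ≤ i → G.next v i = none

lemma walk_nil : G.walk [] = some G.root := rfl

lemma walk_append (α β : List ℕ) :
    G.walk (α ++ β) = (G.walk α).bind fun v => β.foldlM G.next v := by
  simp only [walk, List.foldlM_append]
  rfl

lemma walk_concat (α : List ℕ) (i : ℕ) :
    G.walk (α ++ [i]) = (G.walk α).bind (G.next · i) := by
  simp [walk_append]

lemma walk_ne_none_of_append {α β : List ℕ} (h : G.walk (α ++ β) ≠ none) :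
    G.walk α ≠ none := by
  intro hα
  simp [walk_append, hα] at h

lemma walk_append_congr {α α' : List ℕ} (h : G.walk α = G.walk α') (β : List ℕ) :
    G.walk (α ++ β) = G.walk (α' ++ β) := by
  rw [walk_append, walk_append, h]

lemma Reachable.next {G : ProofGraph V} {v w : V} {i : ℕ} (hv : G.Reachable v)
    (h : G.next v i = some w) : G.Reachable w := by
  obtain ⟨α, hα⟩ := hv
  exact ⟨α ++ [i], by rw [walk_concat, hα, Option.bind_some, h]⟩

lemma forall_reachable {p : V → Prop}
    (hroot : p G.root) (hnext : ∀ v i w, G.next v i = some w → p w) :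
    ∀ v, G.Reachable v → p v := by
  rintro v ⟨α, hα⟩
  induction α using List.reverseRecOn with
  | nil => exact Option.some.inj hα ▸ hroot
  | append_singleton β i _ =>
    rw [walk_concat, Option.bind_eq_some_iff] at hα
    obtain ⟨u, -, hu⟩ := hα
    exact hnext u i v hu

lemma Sound.finite_next {G : ProofGraph V} {v : V} (h : G.Sound v) :
    {i | G.next v i ≠ none}.Finite := by
  obtain ⟨-, prems, -, -, hnone⟩ := h
  refine (Set.finite_Iio prems.length).subset fun i hi => ?_
  by_contra hlen
  exact hi (hnone i (not_lt.mp hlen))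

lemma sound_of_single {v w : V} {S₀ : Seq}
    (hne : (G.label v).2 ≠ .bud) (hinf : Inf (G.label v).2 (G.label v).1 [S₀])
    (hw : G.next v 0 = some w) (hS₀ : (G.label w).1 = S₀)
    (hnone : ∀ i, i ≠ 0 → G.next v i = none) :
    G.Sound v :=
  ⟨hne, [S₀], hinf, fun i => ⟨w, by rw [Fin.fin_one_eq_zero i]; exact ⟨hw, hS₀⟩⟩,
    fun i hi => hnone i (by simp at hi; omega)⟩

lemma gtc_unfold
    (h : ∀ (w : ℕ → V) (n : ℕ → ℕ), G.Reachable (w 0) →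
      (∀ i, G.next (w i) (n i) = some (w (i + 1))) → PathGTC (G.label ∘ w) n) :
    GTC G.unfold := by
  rintro p ⟨hdef, hstep⟩
  choose n hn using hstep
  have hwalk : ∀ i, ∃ v, G.walk (p i) = some v := fun i =>
    Option.ne_none_iff_exists'.mp fun hnone => hdef i (by simp [unfold, hnone])
  choose w hw using hwalk
  have hnext : ∀ i, G.next (w i) (n i) = some (w (i + 1)) := fun i => by
    rw [← hw (i + 1), hn, walk_concat, hw]
    rfl
  rw [exists_trace_iff_pathGTC (L := G.label ∘ w) (fun i => by simp [unfold, hw]) hn]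
  exact h w n ⟨p 0, hw 0⟩ hnext

def Revisits (α : List ℕ) : Prop := ∃ k < α.length, G.walk (α.take k) = G.walk α

def Live (α : List ℕ) : Prop :=
  G.walk α ≠ none ∧ ∀ k < α.length, ¬ G.Revisits (α.take k)

open Classical in
noncomputable def cycleNormalLabel : Lbl := fun α =>
  if G.Live α then
    (G.walk α).map fun v => ((G.label v).1, if G.Revisits α then .bud else (G.label v).2)
  else none

open Classical in
noncomputable def companion (α : List ℕ) : List ℕ :=
  if h : G.Revisits α then α.take (Nat.find h) else α

lemma live_nil : G.Live [] := ⟨by simp [walk_nil], by simp⟩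

lemma Live.of_append {G : ProofGraph V} {α β : List ℕ} (h : G.Live (α ++ β)) : G.Live α := by
  refine ⟨walk_ne_none_of_append G h.1, fun k hk => ?_⟩
  simpa [List.take_append_of_le_length hk.le] using h.2 k (by simp; omega)

lemma Live.concat {G : ProofGraph V} {α : List ℕ} {i : ℕ} (h : G.Live α)
    (hα : ¬ G.Revisits α) (hi : G.walk (α ++ [i]) ≠ none) : G.Live (α ++ [i]) := by
  refine ⟨hi, fun k hk => ?_⟩
  simp only [List.length_append, List.length_singleton] at hk
  rcases Nat.lt_or_ge k α.length with hk' | hk'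
  · simpa [List.take_append_of_le_length hk'.le] using h.2 k hk'
  · simpa [show k = α.length by omega] using hα

lemma Live.companion {G : ProofGraph V} {α : List ℕ} (h : G.Live α) (hα : G.Revisits α) :
    G.companion α <+: α ∧ G.walk (G.companion α) = G.walk α ∧ G.Live (G.companion α) ∧
      ¬ G.Revisits (G.companion α) := by
  classical
  have hc : G.companion α = α.take (Nat.find hα) := dif_pos hα
  obtain ⟨hlt, hwalk⟩ := Nat.find_spec hα
  refine ⟨hc ▸ List.take_prefix _ _, hc ▸ hwalk, ?_, ?_⟩
  · rw [← List.take_append_drop (Nat.find hα) α] at h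
    exact hc ▸ h.of_append
  · rintro ⟨j, hj, hjwalk⟩
    rw [hc, List.length_take, min_eq_left hlt.le] at hj
    rw [hc, List.take_take, min_eq_left hj.le, hwalk] at hjwalk
    exact Nat.find_min hα hj ⟨hj.trans hlt, hjwalk⟩

lemma exists_live_revisits_take {α : List ℕ} (hα : G.walk α ≠ none) (hlive : ¬ G.Live α) :
    ∃ k, G.Live (α.take k) ∧ G.Revisits (α.take k) := by
  classical
  have hex : ∃ k, k < α.length ∧ G.Revisits (α.take k) := by
    by_contra! h
    exact hlive ⟨hα, h⟩
  refine ⟨Nat.find hex, ⟨?_, fun j hj => ?_⟩, (Nat.find_spec hex).2⟩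
  · rw [← List.take_append_drop (Nat.find hex) α] at hα
    exact G.walk_ne_none_of_append hα
  · have hlen := (Nat.find_spec hex).1
    rw [List.length_take, min_eq_left hlen.le] at hj
    rw [List.take_take, min_eq_left hj.le]
    exact Nat.find_min hex hj ∘ fun hrev => ⟨hj.trans hlen, hrev⟩

lemma cycleNormalLabel_ne_none_iff {α : List ℕ} :
    G.cycleNormalLabel α ≠ none ↔ G.Live α := by
  by_cases h : G.Live α
  · simp [cycleNormalLabel, h, h.1]
  · simp [cycleNormalLabel, h]

open Classical in
lemma cycleNormalLabel_of_live {α : List ℕ} {v : V} (hα : G.Live α) (hv : G.walk α = some v) :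
    G.cycleNormalLabel α =
      some ((G.label v).1, if G.Revisits α then .bud else (G.label v).2) := by
  simp [cycleNormalLabel, hα, hv]

open Classical in
lemma cycleNormalLabel_eq_some {α : List ℕ} {S : Seq} {r : Rule}
    (h : G.cycleNormalLabel α = some (S, r)) :
    ∃ v, G.Live α ∧ G.walk α = some v ∧ S = (G.label v).1 ∧
      r = if G.Revisits α then .bud else (G.label v).2 := by
  have hα : G.Live α := G.cycleNormalLabel_ne_none_iff.mp (by simp [h])
  obtain ⟨v, hv⟩ := Option.ne_none_iff_exists'.mp hα.1
  rw [G.cycleNormalLabel_of_live hα hv, Option.some.injEq, Prod.mk.injEq] at h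
  exact ⟨v, hα, hv, h.1.symm, h.2.symm⟩

lemma cycleNormalLabel_eq_some_bud (hsound : ∀ v, G.Reachable v → G.Sound v) {α : List ℕ}
    {S : Seq} (h : G.cycleNormalLabel α = some (S, .bud)) :
    ∃ v, G.Live α ∧ G.Revisits α ∧ G.walk α = some v ∧ S = (G.label v).1 := by
  obtain ⟨v, hα, hv, hS, hr⟩ := G.cycleNormalLabel_eq_some h
  refine ⟨v, hα, by_contra fun hrev => ?_, hv, hS⟩
  rw [if_neg hrev] at hr
  exact (hsound v ⟨α, hv⟩).1 hr.symm

lemma budAt_cycleNormalLabel_iff (hsound : ∀ v, G.Reachable v → G.Sound v) {α : List ℕ} :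
    budAt G.cycleNormalLabel α ↔ G.Live α ∧ G.Revisits α := by
  constructor
  · rintro ⟨S, h⟩
    obtain ⟨v, hα, hrev, -⟩ := G.cycleNormalLabel_eq_some_bud hsound h
    exact ⟨hα, hrev⟩
  · rintro ⟨hα, hrev⟩
    obtain ⟨v, hv⟩ := Option.ne_none_iff_exists'.mp hα.1
    exact ⟨_, by rw [G.cycleNormalLabel_of_live hα hv, if_pos hrev]⟩

lemma cycleNormalLabel_wf (hsound : ∀ v, G.Reachable v → G.Sound v) (α : List ℕ) (S : Seq)
    (r : Rule) (h : G.cycleNormalLabel α = some (S, r)) :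
    (r = .bud ∧ ∀ i, G.cycleNormalLabel (α ++ [i]) = none) ∨
      (r ≠ .bud ∧ ∃ prems, Inf r S prems ∧ childrenOK G.cycleNormalLabel α prems) := by
  obtain ⟨v, hα, hv, rfl, rfl⟩ := G.cycleNormalLabel_eq_some h
  by_cases hrev : G.Revisits α
  · refine .inl ⟨if_pos hrev, fun i => ?_⟩
    by_contra hi
    exact (G.cycleNormalLabel_ne_none_iff.mp hi).2 α.length (by simp) (by simpa using hrev)
  · obtain ⟨hne, prems, hinf, hnext, hnone⟩ := hsound v ⟨α, hv⟩
    rw [if_neg hrev]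
    refine .inr ⟨hne, prems, hinf, fun i => ?_, fun i hi => ?_⟩
    · obtain ⟨w, hw, hlab⟩ := hnext i
      have hwalk : G.walk (α ++ [(i : ℕ)]) = some w := by
        rw [walk_concat, hv, Option.bind_some, hw]
      rw [G.cycleNormalLabel_of_live (hα.concat hrev (by simp [hwalk])) hwalk, hlab]
      exact ⟨_, rfl⟩
    · by_contra hi'
      exact (G.cycleNormalLabel_ne_none_iff.mp hi').1
        (by rw [walk_concat, hv, Option.bind_some, hnone i hi])

noncomputable def cycleNormalTree (hsound : ∀ v, G.Reachable v → G.Sound v) : DTree where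
  label := G.cycleNormalLabel
  root_def := G.cycleNormalLabel_ne_none_iff.mpr G.live_nil
  prefix_closed _ _ h :=
    G.cycleNormalLabel_ne_none_iff.mpr (G.cycleNormalLabel_ne_none_iff.mp h).of_append
  wf := G.cycleNormalLabel_wf hsound

lemma Live.walk_take_ne {G : ProofGraph V} {α : List ℕ} (h : G.Live α) {j k : ℕ} (hjk : j < k)
    (hk : k < α.length) : G.walk (α.take j) ≠ G.walk (α.take k) := fun heq =>
  h.2 k hk ⟨j, by simp; omega, by rwa [List.take_take, min_eq_left hjk.le]⟩

lemma Live.length_le {G : ProofGraph V} (hfin : {v | G.Reachable v}.Finite) {α : List ℕ}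
    (h : G.Live α) : α.length ≤ hfin.toFinset.card := by
  classical
  calc α.length = (Finset.range α.length).card := (Finset.card_range _).symm
    _ ≤ (hfin.toFinset.image some).card := by
      refine Finset.card_le_card_of_injOn (fun k => G.walk (α.take k)) (fun k _ => ?_)
        fun j hj k hk heq => ?_
      · obtain ⟨v, hv⟩ := Option.ne_none_iff_exists'.mp
          (G.walk_ne_none_of_append ((List.take_append_drop k α).symm ▸ h.1))
        simpa [hv] using ⟨α.take k, hv⟩
      · simp only [Finset.coe_range, Set.mem_Iio] at hj hk
        rcases lt_trichotomy j k with hjk | rfl | hjk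
        · exact absurd heq (h.walk_take_ne hjk hk)
        · rfl
        · exact absurd heq.symm (h.walk_take_ne hjk hj)
    _ ≤ hfin.toFinset.card := Finset.card_image_le

lemma Live.exists_next_ne_none {G : ProofGraph V} {α : List ℕ} (h : G.Live α) {x : ℕ}
    (hx : x ∈ α) :
    ∃ v, G.Reachable v ∧ G.next v x ≠ none := by
  obtain ⟨s, t, rfl⟩ := List.append_of_mem hx
  have hsx : G.walk (s ++ [x]) ≠ none :=
    G.walk_ne_none_of_append (β := t) (by simpa using h.1)
  rcases hs : G.walk s with _ | v
  · simp [walk_concat, hs] at hsx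
  · exact ⟨v, ⟨s, hs⟩, by simpa [walk_concat, hs] using hsx⟩

lemma finite_live (hfin : {v | G.Reachable v}.Finite)
    (hsound : ∀ v, G.Reachable v → G.Sound v) : {α | G.Live α}.Finite := by
  have hI : (⋃ v ∈ {v | G.Reachable v}, {i | G.next v i ≠ none}).Finite :=
    hfin.biUnion fun v hv => (hsound v hv).finite_next
  refine (List.finite_of_length_le_of_forall_mem hI hfin.toFinset.card).subset fun α hα =>
    ⟨Live.length_le hfin hα, fun x hx => ?_⟩
  obtain ⟨v, hv, hx⟩ := Live.exists_next_ne_none hα hx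
  exact Set.mem_biUnion hv hx

noncomputable def toPreProof (hfin : {v | G.Reachable v}.Finite)
    (hsound : ∀ v, G.Reachable v → G.Sound v) : PreProof where
  D := G.cycleNormalTree hsound
  fin := (G.finite_live hfin hsound).subset fun _ h => G.cycleNormalLabel_ne_none_iff.mp h
  C := G.companion
  comp σ S h := by
    obtain ⟨v, hσ, hrev, hv, rfl⟩ := G.cycleNormalLabel_eq_some_bud hsound h
    obtain ⟨-, hwalk, hlive, hnrev⟩ := hσ.companion hrev
    rw [hv] at hwalk
    refine ⟨(G.label v).2, ?_, (hsound v ⟨σ, hv⟩).1⟩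
    exact (G.cycleNormalLabel_of_live hlive hwalk).trans (by rw [if_neg hnrev])

section ToPreProof

variable (hfin : {v | G.Reachable v}.Finite) (hsound : ∀ v, G.Reachable v → G.Sound v)

lemma toPreProof_cycleNormal : (G.toPreProof hfin hsound).CycleNormal := fun _ _ h =>
  (G.cycleNormalLabel_eq_some_bud hsound h).elim fun _ ⟨hσ, hrev, _⟩ => (hσ.companion hrev).1

lemma toPreProof_concl : (G.toPreProof hfin hsound).Concl (G.label G.root).1 :=
  ⟨_, G.cycleNormalLabel_of_live G.live_nil (walk_nil G)⟩

lemma usesRule_toPreProof {Q : Rule → Prop} (h : usesRule (G.toPreProof hfin hsound).D.label Q) :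
    Q .bud ∨ ∃ v, G.Reachable v ∧ Q (G.label v).2 := by
  obtain ⟨α, S, r, hα, hr⟩ := h
  obtain ⟨v, -, hv, -, rfl⟩ := G.cycleNormalLabel_eq_some hα
  split_ifs at hr
  · exact .inl hr
  · exact .inr ⟨v, ⟨α, hv⟩, hr⟩

lemma isUnfolding_toPreProof : IsUnfolding (G.toPreProof hfin hsound) G.unfold := by
  have hbud : ∀ α, budAt G.cycleNormalLabel α ↔ G.Live α ∧ G.Revisits α := fun α =>
    G.budAt_cycleNormalLabel_iff hsound
  refine ⟨fun α hα hnbud => ?_, fun α β hα => ?_, fun α hα hnbud => ?_⟩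
  · have hlive := G.cycleNormalLabel_ne_none_iff.mp hα
    obtain ⟨v, hv⟩ := Option.ne_none_iff_exists'.mp hlive.1
    change G.unfold α = G.cycleNormalLabel α
    rw [G.cycleNormalLabel_of_live hlive hv,
      if_neg fun hrev => hnbud ((hbud α).mpr ⟨hlive, hrev⟩)]
    simp [unfold, hv]
  · obtain ⟨hlive, hrev⟩ := (hbud α).mp hα
    simp only [unfold, G.walk_append_congr (hlive.companion hrev).2.1.symm β]
    rfl
  · by_contra hdef
    have hwalk : G.walk α ≠ none := by simpa [unfold] using hdef
    obtain ⟨k, hk⟩ := G.exists_live_revisits_take hwalk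
      fun hlive => G.cycleNormalLabel_ne_none_iff.mpr hlive hα
    exact hnbud _ (List.take_prefix k α) ((hbud _).mpr hk)

end ToPreProof

end ProofGraph

namespace PreProof

variable (P : PreProof)

def resolve (σ : List ℕ) : List ℕ :=
  match P.D.label σ with
  | some (_, .bud) => P.C σ
  | _ => σ

def jump (σ : List ℕ) : Option (List ℕ) := (P.D.label σ).map fun _ => P.resolve σ

lemma resolve_of_ne_bud {σ : List ℕ} (h : ¬ budAt P.D.label σ) : P.resolve σ = σ := by
  unfold resolve
  split
  · exact absurd ⟨_, ‹_›⟩ h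
  · rfl

lemma label_resolve {σ : List ℕ} {S : Seq} {r : Rule} (h : P.D.label σ = some (S, r)) :
    innerWith P.D.label (P.resolve σ) S := by
  by_cases hbud : budAt P.D.label σ
  · obtain ⟨S', hS'⟩ := hbud
    have hr : r = .bud := by simp_all
    subst hr
    simpa [resolve, h] using P.comp σ S h
  · rw [P.resolve_of_ne_bud hbud]
    exact ⟨r, h, fun hr => hbud ⟨S, hr ▸ h⟩⟩

lemma jump_of_label {σ : List ℕ} {q : Seq × Rule} (h : P.D.label σ = some q) :
    P.jump σ = some (P.resolve σ) := by
  simp [jump, h]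

lemma jump_eq_some {σ τ : List ℕ} (h : P.jump σ = some τ) :
    P.D.label σ ≠ none ∧ P.resolve σ = τ := by
  simp only [jump, Option.map_eq_some_iff] at h
  obtain ⟨_, hσ, rfl⟩ := h
  exact ⟨by simp [hσ], rfl⟩

lemma innerWith_of_label_append_ne_none {σ : List ℕ} {i : ℕ}
    (h : P.D.label (σ ++ [i]) ≠ none) : ∃ S, innerWith P.D.label σ S := by
  obtain ⟨⟨S, r⟩, hσ⟩ := Option.ne_none_iff_exists'.mp (P.D.prefix_closed σ [i] h)
  refine ⟨S, r, hσ, fun hr => ?_⟩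
  rcases P.D.wf σ S r hσ with ⟨-, hnone⟩ | ⟨hne, -⟩
  · exact h (hnone i)
  · exact hne hr

end PreProof

lemma IsUnfolding.append_resolve {P : PreProof} {T : Lbl} (hU : IsUnfolding P T)
    (σ γ : List ℕ) : T (σ ++ γ) = T (P.resolve σ ++ γ) := by
  by_cases hbud : budAt P.D.label σ
  · obtain ⟨S, hS⟩ := hbud
    rw [hU.2.1 σ γ ⟨S, hS⟩]
    simp [PreProof.resolve, hS]
  · rw [P.resolve_of_ne_bud hbud]

/-- A path through `P.D` that jumps from buds to their companions is, read from its first node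
on, a path of the tree-unfolding. -/
lemma IsUnfolding.pathGTC_of_jump {P : PreProof} {T : Lbl} (hU : IsUnfolding P T) (hT : GTC T)
    {u : ℕ → List ℕ} {n : ℕ → ℕ} {L : ℕ → Seq × Rule}
    (hpath : ∀ k, P.jump (u k ++ [n k]) = some (u (k + 1)))
    (hL : ∀ k, P.D.label (u k) = some (L k)) : PathGTC L n := by
  let p : ℕ → List ℕ := fun k => u 0 ++ (List.range k).map n
  have hp : ∀ k, p (k + 1) = p k ++ [n k] := by simp [p, List.range_succ]
  have hTp : ∀ k γ, T (p k ++ γ) = T (u k ++ γ) := by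
    intro k
    induction k with
    | zero => simp [p]
    | succ k ih =>
      intro γ
      rw [hp, List.append_assoc, ih, ← List.append_assoc, hU.append_resolve,
        (P.jump_eq_some (hpath k)).2]
  have hTL : ∀ k, T (p k) = some (L k) := by
    intro k
    obtain ⟨S, r, hu, hr⟩ := P.innerWith_of_label_append_ne_none (P.jump_eq_some (hpath k)).1
    rw [← List.append_nil (p k), hTp, List.append_nil, hU.1 _ (by simp [hu]), hL]
    rintro ⟨S', hS'⟩
    exact hr (by simp_all)
  rw [← exists_trace_iff_pathGTC hTL hp]
  exact hT p ⟨fun k => by simp [hTL], fun k => ⟨n k, hp k⟩⟩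

namespace PreProof

variable (P : PreProof)

/-- `(σ, false)` is the node `σ` of `P.D` with `(= L)` replaced by `(= L_a)`; `(σ, true)` is the
weakening inserted below such a node to drop the equation that `(= L_a)` keeps. The labels of
vertices that are not reachable are junk. -/
def eqLaGraph : ProofGraph (List ℕ × Bool) where
  root := (P.resolve [], false)
  next
    | (σ, false), i => match P.D.label σ with
      | some (_, .eqL ..) => if i = 0 then some (σ, true) else none
      | _ => (P.jump (σ ++ [i])).map (·, false)
    | (σ, true), i => if i = 0 then (P.jump (σ ++ [0])).map (·, false) else none
  label
    | (σ, false) => match P.D.label σ with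
      | some (S, r) => (S, r.eqLToEqLa)
      | none => (⟨∅, ∅⟩, .weak)
    | (σ, true) => match P.D.label σ, P.D.label (σ ++ [0]) with
      | some (_, .eqL _ _ t u), some (S, _) => (⟨insert (.eq t u) S.ant, S.suc⟩, .weak)
      | _, _ => (⟨∅, ∅⟩, .weak)

def IsEqLaVertex : List ℕ × Bool → Prop
  | (σ, false) => ∃ S, innerWith P.D.label σ S
  | (σ, true) => ∃ S r, P.D.label σ = some (S, r) ∧ r.IsEqL

lemma eqLaGraph_next_of_isEqL {σ : List ℕ} {S : Seq} {r : Rule}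
    (hσ : P.D.label σ = some (S, r)) (hr : r.IsEqL) (i : ℕ) :
    P.eqLaGraph.next (σ, false) i = if i = 0 then some (σ, true) else none := by
  obtain ⟨v1, v2, t, u, rfl⟩ := hr
  simp [eqLaGraph, hσ]

lemma eqLaGraph_next_of_not_isEqL {σ : List ℕ} {S : Seq} {r : Rule}
    (hσ : P.D.label σ = some (S, r)) (hr : ¬ r.IsEqL) (i : ℕ) :
    P.eqLaGraph.next (σ, false) i = (P.jump (σ ++ [i])).map (·, false) := by
  cases r <;> first | exact absurd ⟨_, _, _, _, rfl⟩ hr | simp [eqLaGraph, hσ]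

lemma eqLaGraph_label_false {σ : List ℕ} {S : Seq} {r : Rule}
    (hσ : P.D.label σ = some (S, r)) :
    P.eqLaGraph.label (σ, false) = (S, r.eqLToEqLa) := by
  simp [eqLaGraph, hσ]

lemma eqLaGraph_label_true {σ : List ℕ} {S S₀ : Seq} {r₀ : Rule} {v1 v2 : ℕ} {t u : Tm}
    (hσ : P.D.label σ = some (S, .eqL v1 v2 t u))
    (h₀ : P.D.label (σ ++ [0]) = some (S₀, r₀)) :
    P.eqLaGraph.label (σ, true) = (⟨insert (.eq t u) S₀.ant, S₀.suc⟩, .weak) := by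
  simp [eqLaGraph, hσ, h₀]

lemma eqLaGraph_next_true {σ : List ℕ} {i : ℕ} {w : List ℕ × Bool}
    (h : P.eqLaGraph.next (σ, true) i = some w) :
    i = 0 ∧ ∃ τ, w = (τ, false) ∧ P.jump (σ ++ [0]) = some τ := by
  simp only [eqLaGraph] at h
  split_ifs at h with hi
  obtain ⟨τ, hτ, rfl⟩ := Option.map_eq_some_iff.mp h
  exact ⟨hi, τ, rfl, hτ⟩

lemma eqLaGraph_next_false {σ : List ℕ} {i : ℕ} {w : List ℕ × Bool}
    (h : P.eqLaGraph.next (σ, false) i = some w) :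
    (∃ τ, w = (τ, false) ∧ P.jump (σ ++ [i]) = some τ) ∨
      (i = 0 ∧ w = (σ, true) ∧ ∃ S r, P.D.label σ = some (S, r) ∧ r.IsEqL) := by
  have hjump : (P.jump (σ ++ [i])).map (·, false) = some w →
      ∃ τ, w = (τ, false) ∧ P.jump (σ ++ [i]) = some τ := fun h => by
    obtain ⟨τ, hτ, rfl⟩ := Option.map_eq_some_iff.mp h
    exact ⟨τ, rfl, hτ⟩
  rcases hσ : P.D.label σ with _ | ⟨S, r⟩
  · simp only [eqLaGraph, hσ] at h
    exact .inl (hjump h)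
  · by_cases hr : r.IsEqL
    · rw [P.eqLaGraph_next_of_isEqL hσ hr] at h
      split_ifs at h with hi
      exact .inr ⟨hi, (Option.some.inj h).symm, S, r, rfl, hr⟩
    · rw [P.eqLaGraph_next_of_not_isEqL hσ hr] at h
      exact .inl (hjump h)

lemma isEqLaVertex_of_jump {σ τ : List ℕ} (h : P.jump σ = some τ) :
    P.IsEqLaVertex (τ, false) := by
  obtain ⟨hσ, rfl⟩ := P.jump_eq_some h
  obtain ⟨⟨S, r⟩, hσ⟩ := Option.ne_none_iff_exists'.mp hσ
  exact ⟨S, P.label_resolve hσ⟩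

lemma isEqLaVertex_of_reachable {v : List ℕ × Bool} (hv : P.eqLaGraph.Reachable v) :
    P.IsEqLaVertex v := by
  refine P.eqLaGraph.forall_reachable ?_ (fun v i w h => ?_) v hv
  · obtain ⟨q, hq⟩ := Option.ne_none_iff_exists'.mp P.D.root_def
    exact P.isEqLaVertex_of_jump (P.jump_of_label hq)
  · obtain ⟨σ, _ | _⟩ := v
    · rcases P.eqLaGraph_next_false h with ⟨τ, rfl, hjump⟩ | ⟨-, rfl, hσ⟩
      · exact P.isEqLaVertex_of_jump hjump
      · exact hσ
    · obtain ⟨-, τ, rfl, hjump⟩ := P.eqLaGraph_next_true h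
      exact P.isEqLaVertex_of_jump hjump

lemma eqLaGraph_sound {v : List ℕ × Bool} (hv : P.IsEqLaVertex v) : P.eqLaGraph.Sound v := by
  obtain ⟨σ, _ | _⟩ := v
  · obtain ⟨S, r, hσ, hr⟩ := hv
    obtain ⟨-, prems, hinf, hchildren⟩ := (P.D.wf σ S r hσ).resolve_left fun h => hr h.1
    by_cases he : r.IsEqL
    · obtain ⟨v1, v2, t, u, rfl⟩ := he
      cases hinf with
      | @eqL Γ Δ =>
        obtain ⟨r₀, h₀⟩ := hchildren.1 ⟨0, by simp⟩
        refine P.eqLaGraph.sound_of_single (w := (σ, true)) ?_ ?_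
          (by rw [P.eqLaGraph_next_of_isEqL hσ ⟨_, _, _, _, rfl⟩, if_pos rfl])
          (by rw [P.eqLaGraph_label_true hσ h₀]) fun i hi => ?_
        · simp [P.eqLaGraph_label_false hσ, Rule.eqLToEqLa]
        · rw [P.eqLaGraph_label_false hσ]
          exact Inf.eqLa
        · rw [P.eqLaGraph_next_of_isEqL hσ ⟨_, _, _, _, rfl⟩, if_neg hi]
    · rw [ProofGraph.Sound, P.eqLaGraph_label_false hσ, Rule.eqLToEqLa_of_not_isEqL he]
      refine ⟨hr, prems, hinf, fun i => ?_, fun i hi => ?_⟩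
      · obtain ⟨r', hi⟩ := hchildren.1 i
        obtain ⟨r'', hres, -⟩ := P.label_resolve hi
        refine ⟨(P.resolve (σ ++ [(i : ℕ)]), false), ?_,
          by rw [P.eqLaGraph_label_false hres]⟩
        rw [P.eqLaGraph_next_of_not_isEqL hσ he, P.jump_of_label hi]
        rfl
      · rw [P.eqLaGraph_next_of_not_isEqL hσ he]
        simp [jump, hchildren.2 i hi]
  · obtain ⟨S, r, hσ, v1, v2, t, u, rfl⟩ := hv
    obtain ⟨-, prems, hinf, hchildren⟩ := (P.D.wf σ _ _ hσ).resolve_left fun h => by simp at h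
    cases hinf with
    | eqL =>
      obtain ⟨r₀, h₀⟩ := hchildren.1 ⟨0, by simp⟩
      obtain ⟨r₁, hres, -⟩ := P.label_resolve h₀
      refine P.eqLaGraph.sound_of_single (w := (P.resolve (σ ++ [0]), false)) ?_ ?_ ?_
        (by rw [P.eqLaGraph_label_false hres]) fun i hi => by simp [eqLaGraph, hi]
      · simp [P.eqLaGraph_label_true hσ h₀]
      · rw [P.eqLaGraph_label_true hσ h₀]
        exact Inf.weak (Finset.subset_insert _ _) subset_rfl
      · simp [eqLaGraph, P.jump_of_label h₀]

lemma eqLaGraph_finite : {v | P.eqLaGraph.Reachable v}.Finite := by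
  refine (P.fin.prod Set.finite_univ).subset fun ⟨σ, b⟩ hv => ⟨?_, trivial⟩
  cases b with
  | false =>
    obtain ⟨S, r, hσ, -⟩ := P.isEqLaVertex_of_reachable hv
    simp [hσ]
  | true =>
    obtain ⟨S, r, hσ, -⟩ := P.isEqLaVertex_of_reachable hv
    simp [hσ]

lemma eqLaGraph_label_rule {v : List ℕ × Bool} (hv : P.IsEqLaVertex v) :
    (P.eqLaGraph.label v).2 = .weak ∨ ∃ σ S r, P.D.label σ = some (S, r) ∧
      (P.eqLaGraph.label v).2 = r.eqLToEqLa := by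
  obtain ⟨σ, _ | _⟩ := v
  · obtain ⟨S, r, hσ, -⟩ := hv
    exact .inr ⟨σ, S, r, hσ, by rw [P.eqLaGraph_label_false hσ]⟩
  · left
    simp only [eqLaGraph]
    split <;> rfl

lemma eqLaGraph_label_true_of_jump {σ τ : List ℕ} {L : Seq × Rule}
    (hσ : P.IsEqLaVertex (σ, true)) (hjump : P.jump (σ ++ [0]) = some τ)
    (hτ : P.D.label τ = some L) :
    (P.eqLaGraph.label (σ, true)).2 = .weak ∧
      L.1.ant ⊆ (P.eqLaGraph.label (σ, true)).1.ant := by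
  obtain ⟨S, r, hσ, v1, v2, t, u, rfl⟩ := hσ
  obtain ⟨h₀, rfl⟩ := P.jump_eq_some hjump
  obtain ⟨⟨S₀, r₀⟩, h₀⟩ := Option.ne_none_iff_exists'.mp h₀
  obtain ⟨r', hres, -⟩ := P.label_resolve h₀
  rw [hres, Option.some.injEq] at hτ
  subst hτ
  rw [P.eqLaGraph_label_true hσ h₀]
  exact ⟨rfl, Finset.subset_insert _ _⟩

section Path

variable {w : ℕ → List ℕ × Bool} {n : ℕ → ℕ}

lemma eqLaGraph_path_true (hpath : ∀ i, P.eqLaGraph.next (w i) (n i) = some (w (i + 1))) {i : ℕ}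
    (hi : (w i).2 = true) :
    (w (i + 1)).2 = false ∧ P.jump ((w i).1 ++ [0]) = some (w (i + 1)).1 := by
  have h := hpath i
  rw [show w i = ((w i).1, true) from Prod.ext rfl hi] at h
  obtain ⟨-, τ, hτ, hjump⟩ := P.eqLaGraph_next_true h
  rw [hτ]
  exact ⟨rfl, hjump⟩

lemma eqLaGraph_path_false (hpath : ∀ i, P.eqLaGraph.next (w i) (n i) = some (w (i + 1)))
    {i : ℕ} (hi : (w i).2 = false) :
    ((w (i + 1)).2 = false ∧ P.jump ((w i).1 ++ [n i]) = some (w (i + 1)).1) ∨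
      (n i = 0 ∧ w (i + 1) = ((w i).1, true)) := by
  have h := hpath i
  rw [show w i = ((w i).1, false) from Prod.ext rfl hi] at h
  rcases P.eqLaGraph_next_false h with ⟨τ, hτ, hjump⟩ | ⟨hn, hτ, -⟩
  · rw [hτ]
    exact .inl ⟨rfl, hjump⟩
  · exact .inr ⟨hn, hτ⟩

/-- Deleting the inserted weakenings from a path of `P.eqLaGraph` leaves a path through `P.D`
that continues at companions instead of buds. -/
lemma eqLaGraph_path_jump (hpath : ∀ i, P.eqLaGraph.next (w i) (n i) = some (w (i + 1)))
    {i : ℕ} (hi : (w i).2 = false) :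
    P.jump ((w i).1 ++ [n i]) = some (w (Nat.nth (fun i => (w i).2 = false)
      (Nat.count (fun i => (w i).2 = false) i + 1))).1 := by
  rcases P.eqLaGraph_path_false hpath hi with ⟨hi₁, hjump⟩ | ⟨hn, hw₁⟩
  · rw [← Nat.count_succ_eq_succ_count hi, Nat.nth_count hi₁]
    exact hjump
  · obtain ⟨hi₂, hjump⟩ := P.eqLaGraph_path_true hpath (i := i + 1) (by simp [hw₁])
    rw [← Nat.count_succ_eq_succ_count hi, ← Nat.count_succ_eq_count (by simp [hw₁]),
      Nat.nth_count hi₂, hn]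
    simpa [hw₁] using hjump

lemma eqLaGraph_pathGTC {T : Lbl} (hU : IsUnfolding P T) (hT : GTC T)
    (hw : P.eqLaGraph.Reachable (w 0))
    (hpath : ∀ i, P.eqLaGraph.next (w i) (n i) = some (w (i + 1))) :
    PathGTC (P.eqLaGraph.label ∘ w) n := by
  have hreach : ∀ i, P.eqLaGraph.Reachable (w i) := fun i => by
    induction i with
    | zero => exact hw
    | succ i ih => exact ih.next (hpath i)
  set keep : ℕ → Prop := fun i => (w i).2 = false
  have hkeep : ∀ i, keep i ∨ keep (i + 1) := fun i => by
    cases hi : (w i).2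
    · exact .inl hi
    · exact .inr (P.eqLaGraph_path_true hpath hi).1
  have hinf := Nat.infinite_setOf_of_forall_or_succ hkeep
  have hinner : ∀ k, ∃ L, P.D.label (w (Nat.nth keep k)).1 = some L := fun k => by
    have hgood := P.isEqLaVertex_of_reachable (hreach (Nat.nth keep k))
    rw [show w (Nat.nth keep k) = ((w (Nat.nth keep k)).1, false) from
      Prod.ext rfl (Nat.nth_mem_of_infinite hinf k)] at hgood
    obtain ⟨S, r, hσ, -⟩ := hgood
    exact ⟨_, hσ⟩
  choose L hL using hinner
  have hplain : PathGTC L (n ∘ Nat.nth keep) := by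
    refine hU.pathGTC_of_jump hT (fun k => ?_) hL
    have := P.eqLaGraph_path_jump hpath (Nat.nth_mem_of_infinite hinf k)
    rwa [Nat.count_nth_of_infinite hinf] at this
  refine hplain.of_stutter keep hkeep (fun i hi => ?_) (fun i hi => ?_)
  · have hσ := hL (Nat.count keep i)
    rw [Nat.nth_count hi] at hσ
    rw [Function.comp_apply, show w i = ((w i).1, false) from Prod.ext rfl hi,
      P.eqLaGraph_label_false hσ, Function.comp_apply, Nat.nth_count hi]
    exact ⟨subset_rfl, rfl, (connStep_eqLToEqLa _).symm, (progStep_eqLToEqLa _).symm⟩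
  · have hi' : (w i).2 = true := by simpa [keep] using hi
    obtain ⟨hi₁, hjump⟩ := P.eqLaGraph_path_true hpath hi'
    have hnth : Nat.nth keep (Nat.count keep i) = i + 1 := by
      rw [← Nat.count_succ_eq_count hi]
      exact Nat.nth_count hi₁
    have hσ := hL (Nat.count keep i)
    rw [hnth] at hσ
    have hgood := P.isEqLaVertex_of_reachable (hreach i)
    rw [Function.comp_apply]
    rw [show w i = ((w i).1, true) from Prod.ext rfl hi'] at hgood ⊢
    exact P.eqLaGraph_label_true_of_jump hgood hjump hσ

end Path

lemma eqLaGraph_sound_of_reachable (v : List ℕ × Bool) (hv : P.eqLaGraph.Reachable v) :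
    P.eqLaGraph.Sound v :=
  P.eqLaGraph_sound (P.isEqLaVertex_of_reachable hv)

noncomputable def cycleNormalEqLa : PreProof :=
  P.eqLaGraph.toPreProof P.eqLaGraph_finite P.eqLaGraph_sound_of_reachable

lemma cycleNormalEqLa_isProof (h : P.IsProof) : P.cycleNormalEqLa.IsProof := by
  obtain ⟨T, hU, hT⟩ := h
  exact ⟨_, ProofGraph.isUnfolding_toPreProof .., P.eqLaGraph.gtc_unfold
    fun _ _ hw hpath => P.eqLaGraph_pathGTC hU hT hw hpath⟩

lemma cycleNormalEqLa_cycleNormal : P.cycleNormalEqLa.CycleNormal :=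
  ProofGraph.toPreProof_cycleNormal _ _ _

lemma cycleNormalEqLa_concl {S : Seq} (h : P.Concl S) : P.cycleNormalEqLa.Concl S := by
  obtain ⟨r, hr⟩ := h
  obtain ⟨r', hres, -⟩ := P.label_resolve hr
  have := P.eqLaGraph.toPreProof_concl P.eqLaGraph_finite P.eqLaGraph_sound_of_reachable
  rwa [show P.eqLaGraph.root = (P.resolve [], false) from rfl,
    P.eqLaGraph_label_false hres] at this

lemma usesRule_cycleNormalEqLa {Q : Rule → Prop} (hbud : ¬ Q .bud) (hweak : ¬ Q .weak)
    (h : usesRule P.cycleNormalEqLa.D.label Q) : usesRule P.D.label (Q ∘ Rule.eqLToEqLa) := by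
  rcases ProofGraph.usesRule_toPreProof _ _ _ h with hQ | ⟨v, hv, hQ⟩
  · exact absurd hQ hbud
  · rcases P.eqLaGraph_label_rule (P.isEqLaVertex_of_reachable hv) with
      hr | ⟨σ, S, r, hσ, hr⟩
    · exact absurd (hr ▸ hQ) hweak
    · exact ⟨σ, S, r, hσ, show Q r.eqLToEqLa from hr ▸ hQ⟩

lemma cycleNormalEqLa_cutFree (h : P.CutFree) : P.cycleNormalEqLa.CutFree := fun hcut => by
  obtain ⟨σ, S, r, hσ, φ, hφ⟩ := P.usesRule_cycleNormalEqLa (by simp) (by simp) hcut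
  exact h ⟨σ, S, r, hσ, φ, Rule.eqLToEqLa_eq_cut hφ⟩

lemma cycleNormalEqLa_noEqL : P.cycleNormalEqLa.NoEqL := fun heqL => by
  obtain ⟨σ, S, r, -, v1, v2, t, u, h⟩ := P.usesRule_cycleNormalEqLa (by simp) (by simp) heqL
  exact r.eqLToEqLa_ne_eqL v1 v2 t u h

end PreProof

/-- If `Γ ⊢ Δ` has a cut-free `CLKID^ω` proof, then it has a
    cut-free cycle-normal `CLKID^ω_a` proof. -/
theorem cutfree_to_cutfree_cyclenormal_a (S : Seq)
    (h : ∃ P : PreProof, P.IsProof ∧ P.CutFree ∧ P.NoEqLa ∧ P.Concl S) :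
    ∃ P' : PreProof, P'.IsProof ∧ P'.CutFree ∧ P'.NoEqL ∧ P'.CycleNormal ∧ P'.Concl S := by
  obtain ⟨P, hproof, hcut, -, hconcl⟩ := h
  exact ⟨P.cycleNormalEqLa, P.cycleNormalEqLa_isProof hproof, P.cycleNormalEqLa_cutFree hcut,
    P.cycleNormalEqLa_noEqL, P.cycleNormalEqLa_cycleNormal, P.cycleNormalEqLa_concl hconcl⟩

end CLKID
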